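/- arXiv:2109.07126 — 2 statements merged into one kernel-verified Lean document; each statement's English description precedes it below -/
import Mathlib

section
/- Let τ be a nonnegative random variable with E[e^{ατ}] < ∞ for some α > 0, W = 1, and m = 1/E[τ]. Define for z ≥ 0, J(z) = inf_{β>0} β Λ*(1/β, z/β) where Λ*(a,b) = sup_{x,y} { a x + b y - ln E[e^{xτ + y}] }. Suppose τ = A + E where A > 0 is a constant and E ~ Exp(λ). Then J(z) = z Λ*(1/z, 1) = λ(1 - zA) - z + z ln( z / (λ(1 - zA)) ) for z ∈ (0, 1/A). -/
open MeasureTheory ProbabilityTheory Real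

/-- The law of an exponential random variable with rate `lam`. -/
noncomputable def expLaw (lam : ℝ) : Measure ℝ :=
  volume.withDensity (exponentialPDF lam)

/-- The Cramer transform `Λ*(a,b) = sup_{x,y} (ax + by - ln E[e^{xτ + yW}])` for the pair
`(τ, W)`, with values in `EReal` (the expectation is a Lebesgue integral in `ℝ≥0∞` and the
logarithm is `ENNReal.log`). -/
noncomputable def cramer {Ω : Type*} [MeasurableSpace Ω] (P : Measure Ω)
    (τ W : Ω → ℝ) (a b : ℝ) : EReal :=
  ⨆ x : ℝ, ⨆ y : ℝ,
    ((a * x + b * y : ℝ) : EReal) -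
      ENNReal.log (∫⁻ ω, ENNReal.ofReal (Real.exp (x * τ ω + y * W ω)) ∂P)

/-- `J(z) = inf_{β > 0} β Λ*(1/β, z/β)`. -/
noncomputable def rateJ {Ω : Type*} [MeasurableSpace Ω] (P : Measure Ω)
    (τ W : Ω → ℝ) (z : ℝ) : EReal :=
  ⨅ (β : ℝ) (_ : 0 < β), (β : EReal) * cramer P τ W (1 / β) (z / β)

section Aux

open Set
open scoped ENNReal

lemma exp_lint_aux (lam x : ℝ) (hlam : 0 < lam) :
    ∫⁻ t, ENNReal.ofReal (Real.exp (x * t)) ∂(expLaw lam)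
      = ∫⁻ t in Ioi (0:ℝ), ENNReal.ofReal (lam * Real.exp (-(lam - x) * t)) := by
  have hm : Measurable (exponentialPDF lam) := by
    have : exponentialPDF lam = fun t =>
        ENNReal.ofReal (if 0 ≤ t then lam * Real.exp (-(lam * t)) else 0) := by
      funext t; rw [exponentialPDF_eq]
    rw [this]
    exact Measurable.ennreal_ofReal
      (Measurable.ite measurableSet_Ici (by fun_prop) measurable_const)
  rw [expLaw, lintegral_withDensity_eq_lintegral_mul _ hm (by fun_prop)]
  have h1 : (exponentialPDF lam * fun t => ENNReal.ofReal (Real.exp (x * t)))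
      = Set.indicator (Ici (0:ℝ)) (fun t => ENNReal.ofReal (lam * Real.exp (-(lam - x) * t))) := by
    funext t
    simp only [Pi.mul_apply, Set.indicator, mem_Ici]
    split_ifs with h
    · rw [exponentialPDF_of_nonneg h, ← ENNReal.ofReal_mul]
      · congr 1
        rw [mul_assoc, ← Real.exp_add]
        ring_nf
      · positivity
    · push_neg at h
      rw [exponentialPDF_of_neg h, zero_mul]
  rw [h1, lintegral_indicator measurableSet_Ici _,
    setLIntegral_congr (Ioi_ae_eq_Ici (a := (0:ℝ))).symm]

lemma exp_lint (lam x : ℝ) (hlam : 0 < lam) (hx : x < lam) :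
    ∫⁻ t, ENNReal.ofReal (Real.exp (x * t)) ∂(expLaw lam)
      = ENNReal.ofReal (lam / (lam - x)) := by
  have hc : 0 < lam - x := by linarith
  rw [exp_lint_aux _ _ hlam, ← ofReal_integral_eq_lintegral_ofReal]
  · congr 1
    simp_rw [neg_mul, integral_const_mul]
    have h2 := integral_comp_mul_left_Ioi (fun u => Real.exp (-u)) 0 hc
    simp only [mul_zero, integral_exp_neg_Ioi, smul_eq_mul] at h2
    rw [h2, neg_zero, Real.exp_zero]
    field_simp
  · exact (exp_neg_integrableOn_Ioi 0 hc).const_mul lam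
  · filter_upwards with t
    positivity

lemma exp_lint_top (lam x : ℝ) (hlam : 0 < lam) (hx : lam ≤ x) :
    ∫⁻ t, ENNReal.ofReal (Real.exp (x * t)) ∂(expLaw lam) = ⊤ := by
  rw [exp_lint_aux _ _ hlam]
  rw [eq_top_iff]
  calc (⊤ : ℝ≥0∞) = ∫⁻ _ in Ioi (0:ℝ), ENNReal.ofReal lam := by
        rw [setLIntegral_const, Real.volume_Ioi, ENNReal.mul_top]
        simp [hlam, ENNReal.ofReal_eq_zero, not_le]
    _ ≤ _ := by
        apply setLIntegral_mono (by fun_prop)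
        intro t ht
        apply ENNReal.ofReal_le_ofReal
        nth_rewrite 1 [show lam = lam * Real.exp 0 by simp]
        gcongr
        · nlinarith [mem_Ioi.mp ht]

variable {Ω : Type*} [MeasurableSpace Ω]

lemma mgf_eq (P : Measure Ω) (lam A : ℝ)
    (E : Ω → ℝ) (hmeas : Measurable E) (hlaw : Measure.map E P = expLaw lam)
    (τ W : Ω → ℝ) (hτ : ∀ ω, τ ω = A + E ω) (hW : ∀ ω, W ω = 1) (x y : ℝ) :
    ∫⁻ ω, ENNReal.ofReal (Real.exp (x * τ ω + y * W ω)) ∂P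
      = ENNReal.ofReal (Real.exp (A * x + y))
        * ∫⁻ t, ENNReal.ofReal (Real.exp (x * t)) ∂(expLaw lam) := by
  have h1 : ∀ ω, Real.exp (x * τ ω + y * W ω)
      = Real.exp (A * x + y) * Real.exp (x * E ω) := by
    intro ω; rw [hτ, hW, ← Real.exp_add]; ring_nf
  simp_rw [h1, ENNReal.ofReal_mul (Real.exp_nonneg _)]
  rw [lintegral_const_mul _ (by fun_prop), ← hlaw, lintegral_map (by fun_prop) hmeas]

lemma log_mgf (P : Measure Ω) (lam A : ℝ) (hlam : 0 < lam)
    (E : Ω → ℝ) (hmeas : Measurable E) (hlaw : Measure.map E P = expLaw lam)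
    (τ W : Ω → ℝ) (hτ : ∀ ω, τ ω = A + E ω) (hW : ∀ ω, W ω = 1) (x y : ℝ) :
    ENNReal.log (∫⁻ ω, ENNReal.ofReal (Real.exp (x * τ ω + y * W ω)) ∂P)
      = if x < lam then ((A * x + y + Real.log (lam / (lam - x)) : ℝ) : EReal) else ⊤ := by
  rw [mgf_eq P lam A E hmeas hlaw τ W hτ hW x y]
  split_ifs with h
  · rw [exp_lint lam x hlam h, ← ENNReal.ofReal_mul (Real.exp_nonneg _),
      ENNReal.log_ofReal_of_pos (by have := div_pos hlam (by linarith : 0 < lam - x); positivity)]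
    rw [Real.log_mul (Real.exp_ne_zero _) (by
      have := div_pos hlam (by linarith : 0 < lam - x); positivity), Real.log_exp]
  · rw [exp_lint_top lam x hlam (not_lt.mp h), ENNReal.mul_top (by simp [Real.exp_pos])]
    exact ENNReal.log_top

lemma cramer_eq_of_ne_one (P : Measure Ω) (lam A : ℝ) (hlam : 0 < lam)
    (E : Ω → ℝ) (hmeas : Measurable E) (hlaw : Measure.map E P = expLaw lam)
    (τ W : Ω → ℝ) (hτ : ∀ ω, τ ω = A + E ω) (hW : ∀ ω, W ω = 1)
    (a b : ℝ) (hb : b ≠ 1) :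
    cramer P τ W a b = ⊤ := by
  rw [eq_top_iff]
  have h0 : (⊤ : EReal) = ⨆ y : ℝ, ((a * 0 + b * y : ℝ) : EReal) -
      ENNReal.log (∫⁻ ω, ENNReal.ofReal (Real.exp (0 * τ ω + y * W ω)) ∂P) := by
    symm
    rw [iSup_eq_top]
    intro c hc
    induction c with
    | bot =>
      refine ⟨0, ?_⟩
      rw [log_mgf P lam A hlam E hmeas hlaw τ W hτ hW 0 0, if_pos hlam]
      simp only [mul_zero, zero_add]
      rw [← EReal.coe_sub]
      exact bot_lt_iff_ne_bot.mpr (EReal.coe_ne_bot _)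
    | coe c =>
      have hb1 : b - 1 ≠ 0 := sub_ne_zero.mpr hb
      refine ⟨(c + 1) / (b - 1), ?_⟩
      rw [log_mgf P lam A hlam E hmeas hlaw τ W hτ hW, if_pos hlam]
      rw [← EReal.coe_sub, EReal.coe_lt_coe_iff]
      have hl : Real.log (lam / (lam - 0)) = 0 := by
        rw [sub_zero, div_self (ne_of_gt hlam), Real.log_one]
      have hkey : (a * 0 + b * ((c + 1) / (b - 1)))
          - (A * 0 + (c + 1) / (b - 1) + Real.log (lam / (lam - 0))) = c + 1 := by
        rw [hl]; field_simp; ring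
      rw [hkey]; linarith
    | top => exact absurd hc (lt_irrefl _)
  rw [h0]
  exact le_iSup (fun x => ⨆ y : ℝ, ((a * x + b * y : ℝ) : EReal) -
    ENNReal.log (∫⁻ ω, ENNReal.ofReal (Real.exp (x * τ ω + y * W ω)) ∂P)) 0

lemma cramer_eq_of_gt (P : Measure Ω) (lam A : ℝ) (hlam : 0 < lam)
    (E : Ω → ℝ) (hmeas : Measurable E) (hlaw : Measure.map E P = expLaw lam)
    (τ W : Ω → ℝ) (hτ : ∀ ω, τ ω = A + E ω) (hW : ∀ ω, W ω = 1)
    (a : ℝ) (ha : A < a) :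
    cramer P τ W a 1
      = (((a - A) * lam - 1 - Real.log (lam * (a - A)) : ℝ) : EReal) := by
  have haA : 0 < a - A := by linarith
  have key : ∀ x y : ℝ, ((a * x + 1 * y : ℝ) : EReal) -
      ENNReal.log (∫⁻ ω, ENNReal.ofReal (Real.exp (x * τ ω + y * W ω)) ∂P)
      = if x < lam
        then (((a - A) * x - Real.log (lam / (lam - x)) : ℝ) : EReal) else ⊥ := by
    intro x y
    rw [log_mgf P lam A hlam E hmeas hlaw τ W hτ hW x y]
    split_ifs with h
    · rw [← EReal.coe_sub, EReal.coe_eq_coe_iff]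
      ring
    · exact EReal.sub_top _
  unfold cramer
  simp_rw [key]
  apply le_antisymm
  · apply iSup_le; intro x
    rw [iSup_const]
    split_ifs with h
    · rw [EReal.coe_le_coe_iff]
      have hlx : 0 < lam - x := by linarith
      have hu : 0 < (lam - x) * (a - A) := by positivity
      have hlog := Real.log_le_sub_one_of_pos hu
      rw [Real.log_mul (ne_of_gt hlx) (ne_of_gt haA)] at hlog
      rw [Real.log_div (ne_of_gt hlam) (ne_of_gt hlx),
        Real.log_mul (ne_of_gt hlam) (ne_of_gt haA)]
      nlinarith
    · exact bot_le
  · set x₀ : ℝ := lam - 1 / (a - A) with hx₀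
    have hx₀lt : x₀ < lam := by
      rw [hx₀]
      have : 0 < 1 / (a - A) := by positivity
      linarith
    have hval : (if x₀ < lam
        then (((a - A) * x₀ - Real.log (lam / (lam - x₀)) : ℝ) : EReal) else ⊥)
        = (((a - A) * lam - 1 - Real.log (lam * (a - A)) : ℝ) : EReal) := by
      rw [if_pos hx₀lt, EReal.coe_eq_coe_iff]
      have h1 : lam - x₀ = 1 / (a - A) := by rw [hx₀]; ring
      rw [h1, Real.log_div (ne_of_gt hlam) (by positivity),
        Real.log_mul (ne_of_gt hlam) (ne_of_gt haA), Real.log_div one_ne_zero (ne_of_gt haA),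
        Real.log_one]
      have h2 : (a - A) * x₀ = (a - A) * lam - 1 := by
        rw [hx₀]; field_simp
      rw [h2]
      all_goals ring
    calc (((a - A) * lam - 1 - Real.log (lam * (a - A)) : ℝ) : EReal)
        = ⨆ _ : ℝ, (if x₀ < lam
            then (((a - A) * x₀ - Real.log (lam / (lam - x₀)) : ℝ) : EReal) else ⊥) := by
          rw [iSup_const, hval]
      _ ≤ _ := le_iSup (fun x => ⨆ _ : ℝ, (if x < lam
            then (((a - A) * x - Real.log (lam / (lam - x)) : ℝ) : EReal) else ⊥)) x₀

end Aux

theorem stmt_10 {Ω : Type*} [MeasurableSpace Ω] (P : Measure Ω) [IsProbabilityMeasure P]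
    (lam A : ℝ) (hlam : 0 < lam) (hA : 0 < A)
    (E : Ω → ℝ) (hmeas : Measurable E) (hlaw : Measure.map E P = expLaw lam)
    (τ W : Ω → ℝ) (hτ : ∀ ω, τ ω = A + E ω) (hW : ∀ ω, W ω = 1)
    (z : ℝ) (hz : z ∈ Set.Ioo 0 (1 / A)) :
    rateJ P τ W z = (z : EReal) * cramer P τ W (1 / z) 1 ∧
      rateJ P τ W z =
        ((lam * (1 - z * A) - z + z * Real.log (z / (lam * (1 - z * A))) : ℝ) : EReal) := by
  obtain ⟨hz0, hz1⟩ := hz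
  have hzA : z * A < 1 := by
    rw [lt_div_iff₀ hA] at hz1; linarith
  have haz : A < 1 / z := by
    rw [lt_div_iff₀ hz0]; linarith [mul_comm z A]
  have hcr := cramer_eq_of_gt P lam A hlam E hmeas hlaw τ W hτ hW (1 / z) haz
  -- value of the term at β = z
  have hterm : ∀ β : ℝ, 0 < β → (β : EReal) * cramer P τ W (1 / β) (z / β)
      = if β = z then ((z * ((1 / z - A) * lam - 1 - Real.log (lam * (1 / z - A))) : ℝ) : EReal)
        else ⊤ := by
    intro β hβ
    split_ifs with h
    · rw [h, show z / z = 1 by field_simp, hcr, ← EReal.coe_mul]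
    · have hb1 : z / β ≠ 1 := by
        intro hc
        apply h
        field_simp at hc
        linarith
      rw [cramer_eq_of_ne_one P lam A hlam E hmeas hlaw τ W hτ hW _ _ hb1]
      exact EReal.mul_top_of_pos (by exact_mod_cast hβ)
  have hrate : rateJ P τ W z
      = ((z * ((1 / z - A) * lam - 1 - Real.log (lam * (1 / z - A))) : ℝ) : EReal) := by
    unfold rateJ
    apply le_antisymm
    · have := iInf_le (fun β : ℝ => ⨅ (_ : 0 < β), (β : EReal) * cramer P τ W (1 / β) (z / β)) z
      refine le_trans (le_trans this (iInf_le _ hz0)) ?_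
      rw [hterm z hz0, if_pos rfl]
    · apply le_iInf; intro β
      apply le_iInf; intro hβ
      rw [hterm β hβ]
      split_ifs with h
      · exact le_refl _
      · exact le_top
  constructor
  · rw [hrate, hcr, ← EReal.coe_mul]
  · rw [hrate, EReal.coe_eq_coe_iff]
    have h1 : 1 / z - A = (1 - z * A) / z := by field_simp
    have h2 : 0 < 1 - z * A := by linarith
    rw [h1]
    have h3 : lam * ((1 - z * A) / z) = lam * (1 - z * A) / z := by ring
    rw [h3, Real.log_div (by positivity) (ne_of_gt hz0)]
    have h4 : Real.log (z / (lam * (1 - z * A)))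
        = Real.log z - Real.log (lam * (1 - z * A)) := by
      rw [Real.log_div (ne_of_gt hz0) (by positivity)]
    rw [h4]
    field_simp
    ring
end

section
/- Let ρ ∈ (0,1) and let 𝒮 be a random variable on ℕ \ {0} with P(𝒮 = k) = e^{-kρ}(kρ)^{k-1}/k!. Define μ(θ) = λ(E[e^{θ𝒮}] - 1) for λ > 0, defined for those θ where the expectation is finite. Then μ(θ) is finite for θ < ρ - ln ρ - 1, and μ(θ) → 0 as θ → 0⁺. -/
open MeasureTheory ProbabilityTheory Filter

/-!
Since `k ^ (k - 1) / k! ≤ e ^ k`, the tilted Borel weights `e ^ (θ k) P(𝒮 = k)` are dominated by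
`ρ⁻¹ (ρ e ^ (θ - ρ + 1)) ^ k`, a geometric series whose ratio is `< 1` exactly when
`θ < ρ - log ρ - 1`. This threshold is positive for `ρ ≠ 1`, so `0` lies in the interior of the
domain of the moment generating function of `𝒮`, where that function is continuous; its value
at `0` is `1`.
-/

open Real Nat Topology

theorem integrable_comp_of_summable_measureReal_mul {Ω E : Type*} [MeasurableSpace Ω]
    [NormedAddCommGroup E] {P : Measure Ω} [IsFiniteMeasure P] {S : Ω → ℕ} (hS : Measurable S)
    {g : ℕ → E} (hg : Summable fun n => P.real {ω | S ω = n} * ‖g n‖) :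
    Integrable (fun ω => g (S ω)) P := by
  have hmap : Integrable g (P.map S) := by
    rw [← Measure.sum_smul_dirac (P.map S)]
    refine integrable_sum_dirac (fun n => measure_ne_top _ _) ?_
    simp only [Measure.map_apply hS (measurableSet_singleton _)]
    exact hg
  exact (integrable_map_measure .of_discrete hS.aemeasurable).mp hmap

/-- At `k = 0` the truncated exponent `k - 1` makes this `1`; the Borel law lives on `k ≥ 1`. -/
noncomputable def borelWeight (ρ : ℝ) (k : ℕ) : ℝ :=
  exp (-k * ρ) * (k * ρ) ^ (k - 1) / k !

theorem borelWeight_nonneg {ρ : ℝ} (hρ : 0 ≤ ρ) (k : ℕ) : 0 ≤ borelWeight ρ k := by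
  unfold borelWeight; positivity

theorem pow_pred_div_factorial_le_exp (n : ℕ) : (n : ℝ) ^ (n - 1) / n ! ≤ exp n := by
  refine le_trans ?_ (pow_div_factorial_le_exp (n : ℝ) n.cast_nonneg n)
  refine div_le_div_of_nonneg_right ?_ (by positivity)
  rcases Nat.eq_zero_or_pos n with rfl | hn
  · simp
  · exact pow_le_pow_right₀ (by exact_mod_cast hn) (Nat.sub_le n 1)

theorem exp_mul_borelWeight_le {ρ : ℝ} (hρ : 0 < ρ) (θ : ℝ) {k : ℕ} (hk : 1 ≤ k) :
    exp (θ * k) * borelWeight ρ k ≤ ρ⁻¹ * (exp (θ - ρ + 1) * ρ) ^ k := by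
  have hpow : ρ⁻¹ * ρ ^ k = ρ ^ (k - 1) := by
    rw [pow_sub₀ _ hρ.ne' hk, pow_one, mul_comm]
  calc exp (θ * k) * borelWeight ρ k
      = exp (θ * k) * exp (-k * ρ) * ρ ^ (k - 1) * ((k : ℝ) ^ (k - 1) / k !) := by
        rw [borelWeight, mul_pow]; ring
    _ ≤ exp (θ * k) * exp (-k * ρ) * ρ ^ (k - 1) * exp k := by
        gcongr; exact pow_pred_div_factorial_le_exp k
    _ = ρ⁻¹ * (exp (θ - ρ + 1) * ρ) ^ k := by
        rw [mul_pow, ← exp_nat_mul, mul_left_comm, hpow, mul_right_comm, ← exp_add, ← exp_add]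
        ring_nf

theorem summable_exp_mul_borelWeight {ρ θ : ℝ} (hρ : 0 < ρ) (hθ : θ < ρ - log ρ - 1) :
    Summable fun k : ℕ => exp (θ * k) * borelWeight ρ k := by
  have hr : exp (θ - ρ + 1) * ρ < 1 :=
    calc exp (θ - ρ + 1) * ρ = exp (θ - ρ + 1 + log ρ) := by
          rw [exp_add (θ - ρ + 1), exp_log hρ]
      _ < 1 := exp_lt_one_iff.mpr (by linarith)
  refine (summable_nat_add_iff 1).mp (Summable.of_nonneg_of_le
    (fun k => mul_nonneg (exp_pos _).le (borelWeight_nonneg hρ.le _))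
    (fun k => exp_mul_borelWeight_le hρ θ (Nat.le_add_left 1 k)) ?_)
  exact ((summable_nat_add_iff 1).mpr
    (summable_geometric_of_lt_one (by positivity) hr)).mul_left ρ⁻¹

theorem stmt_14_general {Ω : Type*} [MeasurableSpace Ω] (P : Measure Ω) [IsProbabilityMeasure P]
    (ρ lam : ℝ) (hρ : ρ ∈ Set.Ioo (0 : ℝ) 1)
    (S : Ω → ℕ) (hmeas : Measurable S)
    (h0 : P {ω | S ω = 0} = 0)
    (hlaw : ∀ k : ℕ, 1 ≤ k →
      P {ω | S ω = k} =
        ENNReal.ofReal (Real.exp (-(k : ℝ) * ρ) * ((k : ℝ) * ρ) ^ (k - 1) / k.factorial)) :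
    (∀ θ : ℝ, θ < ρ - Real.log ρ - 1 →
        Integrable (fun ω => Real.exp (θ * (S ω : ℝ))) P) ∧
      Tendsto (fun θ : ℝ => lam * ((∫ ω, Real.exp (θ * (S ω : ℝ)) ∂P) - 1))
        (nhdsWithin 0 (Set.Ioi 0)) (nhds 0) := by
  obtain ⟨hρ0, hρ1⟩ := hρ
  have hlaw_real (k : ℕ) : P.real {ω | S ω = k} ≤ borelWeight ρ k := by
    rcases Nat.eq_zero_or_pos k with rfl | hk
    · simpa [measureReal_def, h0] using borelWeight_nonneg hρ0.le 0
    · rw [measureReal_def, hlaw k hk]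
      exact (ENNReal.toReal_ofReal (borelWeight_nonneg hρ0.le k)).le
  have hint : Set.Iio (ρ - log ρ - 1) ⊆ integrableExpSet (fun ω => (S ω : ℝ)) P := by
    intro θ hθ
    refine integrable_comp_of_summable_measureReal_mul (g := fun n : ℕ => exp (θ * n)) hmeas ?_
    refine (summable_exp_mul_borelWeight hρ0 hθ).of_nonneg_of_le (fun k => by positivity)
      fun k => ?_
    rw [norm_of_nonneg (exp_pos _).le, mul_comm]
    exact mul_le_mul_of_nonneg_left (hlaw_real k) (exp_pos _).le
  have hgap : 0 < ρ - log ρ - 1 := by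
    linarith [log_lt_sub_one_of_pos hρ0 hρ1.ne]
  have hcont : ContinuousAt (mgf (fun ω => (S ω : ℝ)) P) 0 :=
    continuousOn_mgf.continuousAt (isOpen_interior.mem_nhds
      (interior_maximal hint isOpen_Iio hgap))
  refine ⟨hint, ?_⟩
  have hlim : Tendsto (fun θ => lam * (mgf (fun ω => (S ω : ℝ)) P θ - 1)) (𝓝[>] 0)
      (𝓝 (lam * (mgf (fun ω => (S ω : ℝ)) P 0 - 1))) :=
    ((hcont.tendsto.mono_left nhdsWithin_le_nhds).sub_const 1).const_mul lam
  rwa [mgf_zero, sub_self, mul_zero] at hlim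

theorem stmt_14 {Ω : Type*} [MeasurableSpace Ω] (P : Measure Ω) [IsProbabilityMeasure P]
    (ρ lam : ℝ) (hρ : ρ ∈ Set.Ioo (0 : ℝ) 1) (hlam : 0 < lam)
    (S : Ω → ℕ) (hmeas : Measurable S)
    (h0 : P {ω | S ω = 0} = 0)
    (hlaw : ∀ k : ℕ, 1 ≤ k →
      P {ω | S ω = k} =
        ENNReal.ofReal (Real.exp (-(k : ℝ) * ρ) * ((k : ℝ) * ρ) ^ (k - 1) / k.factorial)) :
    (∀ θ : ℝ, θ < ρ - Real.log ρ - 1 →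
        Integrable (fun ω => Real.exp (θ * (S ω : ℝ))) P) ∧
      Tendsto (fun θ : ℝ => lam * ((∫ ω, Real.exp (θ * (S ω : ℝ)) ∂P) - 1))
        (nhdsWithin 0 (Set.Ioi 0)) (nhds 0) :=
  stmt_14_general P ρ lam hρ S hmeas h0 hlaw
end
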